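/- Let f : [0,1] → [0,1] be a continuous unimodal map with turning point c ∈ (0,1) (f is strictly monotone on [0,c] and on [c,1], with a single change of monotonicity at c). Let J be a restrictive interval of period k > 1: a closed nondegenerate interval with c ∈ J, J strictly contained in [0,1], such that for all 0 ≤ i < j < k the images f^i(J) and f^j(J) overlap in at most one point, f^k(J) ⊆ J, and f^k(∂J) ⊆ ∂J. Then the set Y = f^0(J) ∪ f^1(J) ∪ … ∪ f^{k−1}(J) is a compact forward-invariant set (f(Y) ⊆ Y), and the topological entropy of the restriction of f to Y is at most (1/k)·log 2. -/

import Mathlib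

/-!
An orbit starting in `f^[i] '' J` is in `J` at the times `j` with `k ∣ i + j`; at all other times
it lies in some `f^[r] '' J` with `0 < r < k`, an interval meeting `J` in at most one point, hence
on one side of the turning point `c`. So over `n` steps only about `n / k` sides are free, and
`f^[i] '' J` splits into `2 ^ (n / k + 1)` pieces on each of which every `f^[j]`, `j < n`, is
monotone or antitone. On such a piece the orbits of length `n` fall into at most `n (m + 1) + 1`
classes of `1 / (m + 1)`-close orbits, so `Y` has dynamical covers of size `O(n · 2 ^ (n / k))`.
-/

open Set Dynamics

section ExpGrowth
open ENNReal EReal ExpGrowth Filter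

lemma expGrowthSup_natCast_succ_le_zero :
    expGrowthSup (fun n : ℕ ↦ ((n + 1 : ℕ) : ℝ≥0∞)) ≤ 0 := by
  refine expGrowthSup_le_iff.2 fun b hb ↦ ?_
  induction b using EReal.rec with
  | bot => exact absurd hb not_lt_bot
  | top =>
    filter_upwards [eventually_ge_atTop 1] with n hn
    rw [EReal.top_mul_of_pos (by exact_mod_cast hn), EReal.exp_top]
    exact le_top
  | coe b =>
    have hb : 0 < b := by exact_mod_cast hb
    have hlim : Tendsto (fun n : ℕ ↦ Real.exp (b * n) / n) atTop atTop := by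
      have := (tendsto_exp_mul_div_rpow_atTop 1 b hb).comp tendsto_natCast_atTop_atTop
      simpa [Function.comp_def] using this
    filter_upwards [hlim.eventually_ge_atTop 2, eventually_ge_atTop 1] with n hn hn1
    have hn1 : (1 : ℝ) ≤ n := by exact_mod_cast hn1
    rw [le_div_iff₀ (by linarith)] at hn
    rw [← EReal.coe_coe_eq_natCast, ← EReal.coe_mul, EReal.exp_coe, ← ENNReal.ofReal_natCast]
    refine ENNReal.ofReal_le_ofReal ?_
    push_cast
    linarith

lemma expGrowthSup_two_pow_div_le (k : ℕ) :
    expGrowthSup (fun n : ℕ ↦ (2 : ℝ≥0∞) ^ (n / k)) ≤ ((Real.log 2 / k : ℝ) : EReal) := by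
  refine Eventually.expGrowthSup_le (Eventually.of_forall fun n ↦ ?_)
  rw [← EReal.coe_coe_eq_natCast, ← EReal.coe_mul, EReal.exp_coe,
    ← ENNReal.ofReal_ofNat, ← ENNReal.ofReal_pow zero_le_two]
  refine ENNReal.ofReal_le_ofReal ?_
  rw [← Real.rpow_natCast, Real.rpow_def_of_pos two_pos, div_mul_eq_mul_div, mul_div_assoc]
  gcongr
  exact Nat.cast_div_le

lemma expGrowthSup_le_of_le_mul_succ_mul_two_pow_div {u : ℕ → ℝ≥0∞} {C : ℝ≥0∞} (hC : C ≠ ⊤)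
    (k : ℕ) (h : ∀ n, u n ≤ C * ((n + 1 : ℕ) * 2 ^ (n / k))) :
    expGrowthSup u ≤ ((Real.log 2 / k : ℝ) : EReal) := by
  have hpoly := expGrowthSup_natCast_succ_le_zero
  have hexp := expGrowthSup_two_pow_div_le k
  calc expGrowthSup u
      ≤ expGrowthSup ((fun n : ℕ ↦ ((n + 1 : ℕ) : ℝ≥0∞)) * fun n ↦ 2 ^ (n / k)) :=
        expGrowthSup_le_of_eventually_le hC (Eventually.of_forall h)
    _ ≤ 0 + ((Real.log 2 / k : ℝ) : EReal) :=
        (expGrowthSup_mul_le (.inr (ne_top_of_le_ne_top (coe_ne_top _) hexp))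
          (.inl (ne_top_of_le_ne_top zero_ne_top hpoly))).trans (add_le_add hpoly hexp)
    _ = _ := zero_add _

end ExpGrowth

section Cover
variable {X : Type*}

lemma coverMincard_biUnion_le {ι : Type*} (T : X → X) (s : Finset ι) (F : ι → Set X)
    (U : SetRel X X) (n : ℕ) :
    coverMincard T (⋃ i ∈ s, F i) U n ≤ ∑ i ∈ s, coverMincard T (F i) U n := by
  classical
  induction s using Finset.induction_on with
  | empty => simp
  | insert i s hi ih =>
    rw [Finset.set_biUnion_insert, Finset.sum_insert hi]
    exact (coverMincard_union_le T _ _ U n).trans (add_le_add_right ih _)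

lemma coverMincard_le_of_mapsTo_Iic {T : X → X} {F : Set X} {U : SetRel X X} {n : ℕ}
    (φ : X → ℕ) {N : ℕ} (hφ : MapsTo φ F (Iic N))
    (hfib : ∀ x ∈ F, ∀ y ∈ F, φ x = φ y → (x, y) ∈ dynEntourage T U n) :
    coverMincard T F U n ≤ N + 1 := by
  obtain ⟨s, hsF, hbij⟩ := exists_subset_bijOn F φ
  have hfin : s.Finite := Finite.of_finite_image
    (hbij.image_eq ▸ (finite_Iic N).subset hφ.image_subset) hbij.injOn
  have hcard : hfin.toFinset.card ≤ N + 1 := by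
    simpa using Finset.card_le_card_of_injOn φ (t := Finset.range (N + 1))
      (fun x hx ↦ by simpa [Nat.lt_succ_iff] using hφ (hsF (hfin.mem_toFinset.1 hx)))
      (by simpa using hbij.injOn)
  have hcover : IsDynCoverOf T F U n hfin.toFinset := by
    intro x hx
    obtain ⟨y, hy, hxy⟩ := hbij.surjOn (mem_image_of_mem φ hx)
    exact ⟨y, by simpa using hy, hfib x hx y (hsF hy) hxy.symm⟩
  exact hcover.coverMincard_le_card.trans (by exact_mod_cast hcard)

end Cover

lemma eq_of_sum_eq_of_monotoneOn {α ι M : Type*} [LinearOrder α] [AddCommMonoid M]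
    [PartialOrder M] [IsOrderedCancelAddMonoid M] {s : Finset ι} {g : ι → α → M} {L : Set α}
    (hg : ∀ i ∈ s, MonotoneOn (g i) L) {x y : α} (hx : x ∈ L) (hy : y ∈ L)
    (h : ∑ i ∈ s, g i x = ∑ i ∈ s, g i y) : ∀ i ∈ s, g i x = g i y := by
  wlog hxy : x ≤ y generalizing x y
  · exact fun i hi ↦ (this hy hx h.symm (le_of_not_ge hxy) i hi).symm
  exact (Finset.sum_eq_sum_iff_of_le fun i hi ↦ hg i hi hx hy hxy).1 h

lemma monotoneOn_or_antitoneOn_iterate {α : Type*} [Preorder α] {f : α → α} {L : Set α} {n : ℕ}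
    (h : ∀ j < n, ∃ S, MapsTo f^[j] L S ∧ (MonotoneOn f S ∨ AntitoneOn f S)) :
    ∀ j ≤ n, MonotoneOn f^[j] L ∨ AntitoneOn f^[j] L := by
  intro j hj
  induction j with
  | zero => exact .inl (monotone_id.monotoneOn L)
  | succ j ih =>
    obtain ⟨S, hS, hfS⟩ := h j hj
    rw [Function.iterate_succ']
    rcases ih (by omega) with hmono | hanti <;> rcases hfS with hf | hf
    exacts [.inl (hf.comp hmono hS), .inr (hf.comp_MonotoneOn hmono hS),
      .inr (hf.comp_AntitoneOn hanti hS), .inl (hf.comp hanti hS)]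

lemma subset_Iic_or_subset_Ici_of_inter_subsingleton {α : Type*} [LinearOrder α] {A : Set α}
    (hA : A.OrdConnected) {p q c : α} (hpq : p < q) (hc : c ∈ Icc p q)
    (h : (Icc p q ∩ A).Subsingleton) : A ⊆ Iic c ∨ A ⊆ Ici c := by
  by_contra! hcon
  obtain ⟨u, hu, hcu⟩ := not_subset.1 hcon.1
  obtain ⟨v, hv, hvc⟩ := not_subset.1 hcon.2
  simp only [mem_Iic, not_le, mem_Ici] at hcu hvc
  -- `[max v p, min u q]` is a nondegenerate interval inside both `A` and `[p, q]`
  have hmax : max v p ∈ Icc p q ∩ A :=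
    ⟨⟨le_max_right _ _, max_le (hvc.trans_le hc.2).le hpq.le⟩,
      hA.out hv hu ⟨le_max_left _ _, max_le (hvc.trans hcu).le (hc.1.trans_lt hcu).le⟩⟩
  have hmin : min u q ∈ Icc p q ∩ A :=
    ⟨⟨le_min (hc.1.trans_lt hcu).le hpq.le, min_le_right _ _⟩,
      hA.out hv hu ⟨le_min (hvc.trans hcu).le (hvc.trans_le hc.2).le, min_le_left _ _⟩⟩
  have hlt : max v p < min u q :=
    max_lt (lt_min (hvc.trans hcu) (hvc.trans_le hc.2)) (lt_min (hc.1.trans_lt hcu) hpq)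
  exact hlt.ne (h hmax hmin)

namespace Nat

lemma sub_mod_add_div_mul_eq {i j k : ℕ} (hi : i ≤ k) (h : (i + j) % k = 0) :
    (k - i) % k + j / k * k = j := by
  have hmod : j % k = (k - i) % k := by
    refine Nat.ModEq.add_right_cancel' i ?_
    rw [Nat.ModEq, Nat.sub_add_cancel hi, Nat.mod_self, add_comm, h]
  rw [← hmod, Nat.mod_add_div']

end Nat

noncomputable def gridIndex (m : ℕ) (x : Icc (0 : ℝ) 1) : ℕ := ⌊(x : ℝ) * (m + 1)⌋₊

lemma gridIndex_mono (m : ℕ) : Monotone (gridIndex m) :=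
  fun _ _ hxy ↦ Nat.floor_mono (by gcongr)

lemma gridIndex_le (m : ℕ) (x : Icc (0 : ℝ) 1) : gridIndex m x ≤ m + 1 := by
  have hx : (x : ℝ) * (m + 1) ≤ ((m + 1 : ℕ) : ℝ) := by
    push_cast; nlinarith [x.2.1, x.2.2]
  exact (Nat.floor_mono hx).trans_eq (Nat.floor_natCast _)

lemma dist_lt_of_gridIndex_eq (m : ℕ) {x y : Icc (0 : ℝ) 1} (h : gridIndex m x = gridIndex m y) :
    dist x y < 1 / ((m : ℝ) + 1) := by
  have hm : (0 : ℝ) < m + 1 := by positivity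
  have hx := Nat.floor_le (mul_nonneg x.2.1 hm.le)
  have hx' := Nat.lt_floor_add_one ((x : ℝ) * (m + 1))
  have hy := Nat.floor_le (mul_nonneg y.2.1 hm.le)
  have hy' := Nat.lt_floor_add_one ((y : ℝ) * (m + 1))
  rw [gridIndex, gridIndex] at h
  rw [h] at hx hx'
  rw [Subtype.dist_eq, Real.dist_eq, abs_sub_lt_iff, lt_div_iff₀ hm, lt_div_iff₀ hm]
  constructor <;> nlinarith

lemma coverMincard_le_of_monotoneOn_or_antitoneOn {f : Icc (0 : ℝ) 1 → Icc (0 : ℝ) 1}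
    {L : Set (Icc (0 : ℝ) 1)} {n : ℕ} (m : ℕ)
    (h : ∀ j < n, MonotoneOn f^[j] L ∨ AntitoneOn f^[j] L) :
    coverMincard f L {p | dist p.1 p.2 < 1 / ((m : ℝ) + 1)} n ≤ n * (m + 1) + 1 := by
  classical
  -- reversing the grid index along antitone iterates makes every `g j` monotone on `L`, so that
  -- the sum of the `g j` determines each of them
  set g : ℕ → Icc (0 : ℝ) 1 → ℕ := fun j x ↦
    if MonotoneOn f^[j] L then gridIndex m (f^[j] x) else m + 1 - gridIndex m (f^[j] x)
  have hg_mono : ∀ j ∈ Finset.range n, MonotoneOn (g j) L := by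
    intro j hj
    by_cases hj' : MonotoneOn f^[j] L
    · simpa [g, hj', Function.comp_def] using (gridIndex_mono m).comp_monotoneOn hj'
    · have hanti := (gridIndex_mono m).comp_antitoneOn
        ((h j (Finset.mem_range.1 hj)).resolve_left hj')
      simp only [g, hj', if_false]
      exact fun x hx y hy hxy ↦ Nat.sub_le_sub_left (hanti hx hy hxy) _
  have hgrid_eq : ∀ j x y, g j x = g j y → gridIndex m (f^[j] x) = gridIndex m (f^[j] y) := by
    intro j x y hxy
    by_cases hj' : MonotoneOn f^[j] L
    · simpa [g, hj'] using hxy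
    · simp only [g, hj', if_false] at hxy
      have := gridIndex_le m (f^[j] x)
      have := gridIndex_le m (f^[j] y)
      omega
  refine coverMincard_le_of_mapsTo_Iic (fun x ↦ ∑ j ∈ Finset.range n, g j x) ?_ ?_
  · intro x _
    refine (Finset.sum_le_card_nsmul _ _ (m + 1) fun j _ ↦ ?_).trans (by simp)
    by_cases hj' : MonotoneOn f^[j] L
    · simpa [g, hj'] using gridIndex_le m (f^[j] x)
    · simp [g, hj']
  · intro x hx y hy hsum
    refine mem_dynEntourage.2 fun j hj ↦ dist_lt_of_gridIndex_eq m (hgrid_eq j x y ?_)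
    exact eq_of_sum_eq_of_monotoneOn hg_mono hx hy hsum j (Finset.mem_range.2 hj)

section Renormalisation

variable {α : Type*} {f : α → α} {J : Set α} {k : ℕ}

lemma image_iterate_subset_image_iterate_mod (hret : MapsTo f^[k] J J) (a : ℕ) :
    f^[a] '' J ⊆ f^[a % k] '' J := by
  rw [← Nat.mod_add_div a k, Function.iterate_add, Function.iterate_mul, image_comp,
    Nat.add_mul_mod_self_left, Nat.mod_mod]
  exact image_mono ((hret.iterate _).image_subset)

lemma mapsTo_biUnion_image_iterate (hk : 0 < k) (hret : MapsTo f^[k] J J) :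
    MapsTo f (⋃ i ∈ Finset.range k, f^[i] '' J) (⋃ i ∈ Finset.range k, f^[i] '' J) := by
  intro x hx
  simp only [Finset.mem_range, mem_iUnion, exists_prop] at hx ⊢
  obtain ⟨i, -, z, hz, rfl⟩ := hx
  refine ⟨(i + 1) % k, Nat.mod_lt _ hk, image_iterate_subset_image_iterate_mod hret (i + 1) ?_⟩
  exact ⟨z, hz, Function.iterate_succ_apply' f i z⟩

-- `(k - i) % k + t * k` are the times at which an orbit starting in `f^[i] '' J` is back in `J`.
def returnCylinder [LE α] (f : α → α) (J : Set α) (c : α) (k i T : ℕ) (w : Fin T → Bool) :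
    Set α :=
  {x ∈ f^[i] '' J | ∀ t : Fin T, f^[(k - i) % k + t * k] x ≤ c ↔ w t}

lemma mapsTo_iterate_returnCylinder [LinearOrder α] {c : α} (hret : MapsTo f^[k] J J)
    (hside : ∀ i, 0 < i → i < k → f^[i] '' J ⊆ Iic c ∨ f^[i] '' J ⊆ Ici c)
    {i j T : ℕ} (hi : i < k) (hj : j / k < T) (w : Fin T → Bool) :
    MapsTo f^[j] (returnCylinder f J c k i T w) (Iic c) ∨
      MapsTo f^[j] (returnCylinder f J c k i T w) (Ici c) := by
  by_cases hr : (i + j) % k = 0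
  · have hside_j : ∀ x ∈ returnCylinder f J c k i T w, f^[j] x ≤ c ↔ w ⟨j / k, hj⟩ := by
      intro x hx
      simpa only [Nat.sub_mod_add_div_mul_eq hi.le hr] using hx.2 ⟨j / k, hj⟩
    cases hw : w ⟨j / k, hj⟩
    · exact .inr fun x hx ↦ (not_le.1 fun h ↦ by simpa [hw] using (hside_j x hx).1 h).le
    · exact .inl fun x hx ↦ (hside_j x hx).2 hw
  · have hsub : MapsTo f^[j] (returnCylinder f J c k i T w) (f^[(i + j) % k] '' J) := by
      rintro _ ⟨⟨z, hz, rfl⟩, -⟩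
      rw [← Function.iterate_add_apply, add_comm j i]
      exact image_iterate_subset_image_iterate_mod hret _ (mem_image_of_mem _ hz)
    rcases hside _ (Nat.pos_of_ne_zero hr) (Nat.mod_lt _ (by omega)) with h | h
    exacts [.inl (hsub.mono_right h), .inr (hsub.mono_right h)]

lemma biUnion_image_iterate_subset_iUnion_returnCylinder [LinearOrder α] (c : α) (T : ℕ) :
    ⋃ i ∈ Finset.range k, f^[i] '' J ⊆
      ⋃ (i : Fin k) (w : Fin T → Bool), returnCylinder f J c k i T w := by
  intro x hx
  simp only [Finset.mem_range, mem_iUnion, exists_prop] at hx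
  obtain ⟨i, hi, hx⟩ := hx
  exact mem_iUnion₂.2 ⟨⟨i, hi⟩, fun t ↦ decide (f^[(k - i) % k + t * k] x ≤ c), hx, by simp⟩

end Renormalisation

lemma coverMincard_biUnion_image_iterate_le {f : Icc (0 : ℝ) 1 → Icc (0 : ℝ) 1}
    {J : Set (Icc (0 : ℝ) 1)} {c : Icc (0 : ℝ) 1} {k : ℕ}
    (hle : MonotoneOn f (Iic c) ∨ AntitoneOn f (Iic c))
    (hge : MonotoneOn f (Ici c) ∨ AntitoneOn f (Ici c)) (hret : MapsTo f^[k] J J)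
    (hside : ∀ i, 0 < i → i < k → f^[i] '' J ⊆ Iic c ∨ f^[i] '' J ⊆ Ici c) (n m : ℕ) :
    coverMincard f (⋃ i ∈ Finset.range k, f^[i] '' J) {p | dist p.1 p.2 < 1 / ((m : ℝ) + 1)} n ≤
      k * 2 ^ (n / k + 1) * (n * (m + 1) + 1) := by
  set T := n / k + 1
  set U : SetRel (Icc (0 : ℝ) 1) (Icc (0 : ℝ) 1) := {p | dist p.1 p.2 < 1 / ((m : ℝ) + 1)}
  have hlaps (i : Fin k) (w : Fin T → Bool) : ∀ j < n,
      MonotoneOn f^[j] (returnCylinder f J c k i T w) ∨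
        AntitoneOn f^[j] (returnCylinder f J c k i T w) := by
    refine fun j hj ↦ monotoneOn_or_antitoneOn_iterate (fun j hj ↦ ?_) j hj.le
    rcases mapsTo_iterate_returnCylinder hret hside i.2
      (Nat.lt_succ_of_le (Nat.div_le_div_right hj.le)) w with h | h
    exacts [⟨_, h, hle⟩, ⟨_, h, hge⟩]
  calc coverMincard f (⋃ i ∈ Finset.range k, f^[i] '' J) U n
      ≤ coverMincard f (⋃ iw ∈ (Finset.univ : Finset (Fin k × (Fin T → Bool))),
          returnCylinder f J c k iw.1 T iw.2) U n := by
        refine coverMincard_monotone_subset f U n ?_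
        simpa [iUnion_prod'] using biUnion_image_iterate_subset_iUnion_returnCylinder c T
    _ ≤ ∑ iw : Fin k × (Fin T → Bool), coverMincard f (returnCylinder f J c k iw.1 T iw.2) U n :=
        coverMincard_biUnion_le f _ _ U n
    _ ≤ ∑ _iw : Fin k × (Fin T → Bool), ((n * (m + 1) + 1 : ℕ) : ℕ∞) :=
        Finset.sum_le_sum fun iw _ ↦ (coverMincard_le_of_monotoneOn_or_antitoneOn m
          (hlaps iw.1 iw.2)).trans_eq (by norm_cast)
    _ = k * 2 ^ T * (n * (m + 1) + 1) := by simp [T, mul_add]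

lemma coverEntropy_biUnion_image_iterate_le {f : Icc (0 : ℝ) 1 → Icc (0 : ℝ) 1}
    {J : Set (Icc (0 : ℝ) 1)} {c : Icc (0 : ℝ) 1} {k : ℕ}
    (hle : MonotoneOn f (Iic c) ∨ AntitoneOn f (Iic c))
    (hge : MonotoneOn f (Ici c) ∨ AntitoneOn f (Ici c)) (hret : MapsTo f^[k] J J)
    (hside : ∀ i, 0 < i → i < k → f^[i] '' J ⊆ Iic c ∨ f^[i] '' J ⊆ Ici c) :
    coverEntropy f (⋃ i ∈ Finset.range k, f^[i] '' J) ≤ ((Real.log 2 / k : ℝ) : EReal) := by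
  rw [coverEntropy_eq_iSup_basis Metric.uniformity_basis_dist_inv_nat_succ]
  refine iSup₂_le fun m _ ↦ expGrowthSup_le_of_le_mul_succ_mul_two_pow_div
    (C := (2 * k * (m + 1) : ℕ)) (ENNReal.natCast_ne_top _) k fun n ↦ ?_
  have hcount : k * 2 ^ (n / k + 1) * (n * (m + 1) + 1) ≤
      2 * k * (m + 1) * ((n + 1) * 2 ^ (n / k)) := by
    rw [pow_succ]
    nlinarith [Nat.zero_le (k * 2 ^ (n / k) * m * 2)]
  have := (coverMincard_biUnion_image_iterate_le hle hge hret hside n m).trans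
    (Nat.cast_le.2 hcount)
  exact_mod_cast ENat.toENNReal_le.2 this

theorem entropy_on_renormalisation_cycle_le_general
    (f : (Icc (0 : ℝ) 1) → (Icc (0 : ℝ) 1)) (hf : Continuous f)
    (c : Icc (0 : ℝ) 1)
    (huni : (StrictMonoOn f {x | x ≤ c} ∧ StrictAntiOn f {x | c ≤ x}) ∨
            (StrictAntiOn f {x | x ≤ c} ∧ StrictMonoOn f {x | c ≤ x}))
    (k : ℕ) (hk : 1 < k)
    (p q : Icc (0 : ℝ) 1) (hpq : p < q)
    (J : Set (Icc (0 : ℝ) 1)) (hJ : J = Icc p q)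
    (hcJ : c ∈ J)
    (hoverlap : ∀ i j : ℕ, i < j → j < k → (f^[i] '' J ∩ f^[j] '' J).Subsingleton)
    (hret : f^[k] '' J ⊆ J)
    (Y : Set (Icc (0 : ℝ) 1)) (hY : Y = ⋃ i ∈ Finset.range k, f^[i] '' J) :
    IsCompact Y ∧ MapsTo f Y Y ∧
      coverEntropy f Y ≤ ((Real.log 2 / k : ℝ) : EReal) := by
  subst hJ hY
  have hret : MapsTo f^[k] (Icc p q) (Icc p q) := mapsTo_iff_image_subset.2 hret
  have hside (i : ℕ) (hi : 0 < i) (hik : i < k) :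
      f^[i] '' Icc p q ⊆ Iic c ∨ f^[i] '' Icc p q ⊆ Ici c :=
    subset_Iic_or_subset_Ici_of_inter_subsingleton
      (isPreconnected_Icc.image _ (hf.iterate i).continuousOn).ordConnected hpq hcJ
      (by simpa using hoverlap 0 i hi hik)
  have hlaps : (MonotoneOn f (Iic c) ∨ AntitoneOn f (Iic c)) ∧
      (MonotoneOn f (Ici c) ∨ AntitoneOn f (Ici c)) := by
    rcases huni with ⟨h₁, h₂⟩ | ⟨h₁, h₂⟩
    exacts [⟨.inl h₁.monotoneOn, .inr h₂.antitoneOn⟩, ⟨.inr h₁.antitoneOn, .inl h₂.monotoneOn⟩]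
  exact ⟨(Finset.range k).isCompact_biUnion fun i _ ↦ isCompact_Icc.image (hf.iterate i),
    mapsTo_biUnion_image_iterate (by omega) hret,
    coverEntropy_biUnion_image_iterate_le hlaps.1 hlaps.2 hret hside⟩

theorem entropy_on_renormalisation_cycle_le
    (f : (Icc (0 : ℝ) 1) → (Icc (0 : ℝ) 1)) (hf : Continuous f)
    (c : Icc (0 : ℝ) 1) (hc0 : (0 : ℝ) < c.1) (hc1 : c.1 < 1)
    (huni : (StrictMonoOn f {x | x ≤ c} ∧ StrictAntiOn f {x | c ≤ x}) ∨
            (StrictAntiOn f {x | x ≤ c} ∧ StrictMonoOn f {x | c ≤ x}))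
    (k : ℕ) (hk : 1 < k)
    (p q : Icc (0 : ℝ) 1) (hpq : p < q)
    (J : Set (Icc (0 : ℝ) 1)) (hJ : J = Icc p q)
    (hcJ : c ∈ J) (hJne : J ≠ univ)
    (hoverlap : ∀ i j : ℕ, i < j → j < k → (f^[i] '' J ∩ f^[j] '' J).Subsingleton)
    (hret : f^[k] '' J ⊆ J)
    (hbd : f^[k] '' ({p, q} : Set (Icc (0 : ℝ) 1)) ⊆ ({p, q} : Set (Icc (0 : ℝ) 1)))
    (Y : Set (Icc (0 : ℝ) 1)) (hY : Y = ⋃ i ∈ Finset.range k, f^[i] '' J) :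
    IsCompact Y ∧ MapsTo f Y Y ∧
      coverEntropy f Y ≤ ((Real.log 2 / k : ℝ) : EReal) :=
  entropy_on_renormalisation_cycle_le_general f hf c huni k hk p q hpq J hJ hcJ hoverlap hret Y hY
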